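/- Let W = W(A,T,φ) be a simple generalized Witt algebra over a field F of characteristic 0 (so A ≠ 0 and φ is nondegenerate). Let A' be a subgroup of A that is free abelian of rank n with basis ε_1, …, ε_n, and let T' be an m-dimensional subspace of T (m ≤ n) with basis ∂_1, …, ∂_m, such that (A',T') is a nondegenerate pair; set ∂_i = ∂_m for m ≤ i ≤ n. Let k_1, …, k_n, k'_1, …, k'_n be integers, each at least 2, such that any two of these 2n integers are relatively prime, and set w = Σ_{i=1}^n (t^{k_iε_i} + t^{k'_iε_i}) ∂_i. Let θ be the automorphism of W given by θ(t^α ∂) = χ(α) t^{σ(α)} τ(∂), where χ : A → F× is a character, σ is a group automorphism of A, and τ is an F-linear automorphism of T satisfying φ(τ(∂), σ(γ)) = φ(∂, γ) for all ∂ ∈ T, γ ∈ A. If θ(w) = w, then θ(x) = x for every x in the subalgebra consisting of the finitely supported functions supported in A' with values in T'. -/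

import Mathlib

/-! Generalized Witt algebras `W(A,T,φ)` over a field `F` of characteristic `0`,
following Djokovic-Zhao. Here `A` is an (additive) abelian group, `T` an
`F`-vector space, and `φ : T × A → F` is `F`-linear in the first variable and
additive in the second (encoded as `φ : T →ₗ[F] (A →+ F)`). -/

namespace GW

variable {F : Type*} [Field F]
variable {A : Type*} [AddCommGroup A]
variable {T : Type*} [AddCommGroup T] [Module F T]
variable (φ : T →ₗ[F] (A →+ F))

/-- The bracket on finitely supported functions `A →₀ T`: the bilinear extension of
`[t^α a, t^β b] = t^(α+β) (φ a β • b - φ b α • a)`. -/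
noncomputable def brk (x y : A →₀ T) : A →₀ T :=
  x.sum fun α a => y.sum fun β b => Finsupp.single (α + β) (φ a β • b - φ b α • a)

lemma brk_zero_left (y : A →₀ T) : brk φ 0 y = 0 := by
  simp [brk]

lemma brk_zero_right (x : A →₀ T) : brk φ x 0 = 0 := by
  simp [brk]

lemma brk_single_single (α β : A) (a b : T) :
    brk φ (Finsupp.single α a) (Finsupp.single β b)
      = Finsupp.single (α + β) (φ a β • b - φ b α • a) := by
  unfold brk
  rw [Finsupp.sum_single_index, Finsupp.sum_single_index]
  · simp
  · simp

lemma brk_add_left (x x' y : A →₀ T) : brk φ (x + x') y = brk φ x y + brk φ x' y := by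
  unfold brk
  rw [Finsupp.sum_add_index']
  · intro α; simp
  · intro α a a'
    rw [← Finsupp.sum_add]
    congr 1
    funext β b
    rw [← Finsupp.single_add]
    congr 1
    simp only [map_add, LinearMap.add_apply, AddMonoidHom.add_apply, add_smul, smul_add]
    abel

lemma brk_add_right (x y y' : A →₀ T) : brk φ x (y + y') = brk φ x y + brk φ x y' := by
  unfold brk
  rw [← Finsupp.sum_add]
  congr 1
  funext α a
  rw [Finsupp.sum_add_index']
  · intro β; simp
  · intro β b b'
    rw [← Finsupp.single_add]
    congr 1
    simp only [map_add, LinearMap.add_apply, AddMonoidHom.add_apply, add_smul, smul_add]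
    abel

lemma brk_neg_swap (x y : A →₀ T) : brk φ y x = - brk φ x y := by
  unfold brk
  rw [Finsupp.sum_comm]
  rw [← Finsupp.sum_neg]
  congr 1
  funext α a
  rw [← Finsupp.sum_neg]
  congr 1
  funext β b
  rw [← Finsupp.single_neg, add_comm β α]
  congr 1
  abel

lemma brk_smul_right (c : F) (x y : A →₀ T) : brk φ x (c • y) = c • brk φ x y := by
  unfold brk
  rw [Finsupp.smul_sum]
  congr 1
  funext α a
  rw [Finsupp.sum_smul_index', Finsupp.smul_sum]
  · congr 1
    funext β b
    rw [Finsupp.smul_single]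
    congr 1
    simp only [map_smul, LinearMap.smul_apply, AddMonoidHom.smul_apply, smul_sub, smul_smul,
      smul_eq_mul]
    rw [mul_comm]
  · intro β; simp

lemma brk_self [CharZero F] (x : A →₀ T) : brk φ x x = 0 := by
  have h : brk φ x x = -brk φ x x := brk_neg_swap φ x x
  have h2 : (2 : F) • brk φ x x = 0 := by
    rw [two_smul]
    nth_rewrite 2 [h]
    simp
  calc brk φ x x = (2 : F)⁻¹ • ((2 : F) • brk φ x x) :=
        (inv_smul_smul₀ two_ne_zero _).symm
    _ = 0 := by rw [h2, smul_zero]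

lemma brk_leibniz (x y z : A →₀ T) :
    brk φ x (brk φ y z) = brk φ (brk φ x y) z + brk φ y (brk φ x z) := by
  induction x using Finsupp.induction_linear with
  | zero => simp [brk_zero_left, brk_zero_right]
  | add f g hf hg =>
      simp only [brk_add_left, brk_add_right, hf, hg]; abel
  | single α a =>
    induction y using Finsupp.induction_linear with
    | zero => simp [brk_zero_left, brk_zero_right]
    | add f g hf hg =>
        simp only [brk_add_left, brk_add_right, hf, hg]; abel
    | single β b =>
      induction z using Finsupp.induction_linear with
      | zero => simp [brk_zero_left, brk_zero_right]
      | add f g hf hg =>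
          simp only [brk_add_left, brk_add_right, hf, hg]; abel
      | single γ c =>
        rw [brk_single_single, brk_single_single, brk_single_single, brk_single_single,
          brk_single_single, brk_single_single]
        rw [show β + (α + γ) = α + β + γ by abel, show α + (β + γ) = α + β + γ by abel,
          ← Finsupp.single_add]
        congr 1
        simp only [map_add, map_sub, map_smul, LinearMap.sub_apply, LinearMap.smul_apply,
          AddMonoidHom.add_apply, AddMonoidHom.sub_apply, AddMonoidHom.smul_apply,
          smul_eq_mul, smul_sub, sub_smul, add_smul, smul_smul]
        ring_nf
        module

variable (F A T) in
/-- The carrier of the generalized Witt algebra `W(A,T,φ)`: finitely supported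
functions from `A` to `T`, where `t^α ∂` corresponds to the function supported
at `α` with value `∂`. -/
@[nolint unusedArguments]
def W (_φ : T →ₗ[F] (A →+ F)) : Type _ := A →₀ T

noncomputable instance : AddCommGroup (W F A T φ) := inferInstanceAs (AddCommGroup (A →₀ T))

noncomputable instance : Module F (W F A T φ) := inferInstanceAs (Module F (A →₀ T))

/-- The element `t^α ∂` of the generalized Witt algebra. -/
noncomputable def tt (α : A) (d : T) : W F A T φ := Finsupp.single α d

/-- The underlying finitely supported function of an element of `W(A,T,φ)`. -/
def toF (x : W F A T φ) : A →₀ T := x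

/-- The Lie ring structure on the generalized Witt algebra `W(A,T,φ)`, with bracket
determined by `[t^α ∂, t^β ∂'] = t^(α+β) (φ(∂,β) • ∂' - φ(∂',α) • ∂)`. -/
noncomputable instance [CharZero F] : LieRing (W F A T φ) :=
  { (inferInstance : AddCommGroup (A →₀ T)) with
    bracket := fun x y => brk φ (toF φ x) (toF φ y)
    add_lie := fun x y z => brk_add_left φ x y z
    lie_add := fun x y z => brk_add_right φ x y z
    lie_self := fun x => brk_self φ x
    leibniz_lie := fun x y z => brk_leibniz φ x y z }

/-- The generalized Witt algebra `W(A,T,φ)` as a Lie algebra over `F`. -/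
noncomputable instance [CharZero F] : LieAlgebra F (W F A T φ) :=
  { (inferInstance : Module F (A →₀ T)) with
    lie_smul := fun c x y => brk_smul_right φ c x y }

@[simp] theorem bracket_tt [CharZero F] (α β : A) (a b : T) :
    ⁅tt φ α a, tt φ β b⁆ = tt φ (α + β) (φ a β • b - φ b α • a) :=
  brk_single_single φ α β a b

/-- Nondegeneracy of the map `φ`. -/
def Nondeg : Prop :=
  (∀ α : A, (∀ d : T, φ d α = 0) → α = 0) ∧ (∀ d : T, (∀ α : A, φ d α = 0) → d = 0)

/-- `(A', T')` is a nondegenerate pair for `φ`. -/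
def NondegPair (A' : AddSubgroup A) (T' : Submodule F T) : Prop :=
  (∀ d ∈ T', (∀ α ∈ A', φ d α = 0) → d = 0) ∧
  (∀ α ∈ A', (∀ d ∈ T', φ d α = 0) → α = 0)

/-- The subset (in fact Lie subalgebra) of `W(A,T,φ)` consisting of the finitely
supported functions supported in `A'` with values in `T'`. -/
def supportedIn (A' : AddSubgroup A) (T' : Submodule F T) : Set (W F A T φ) :=
  {x | (∀ α : A, toF φ x α ∈ T') ∧ ∀ α : A, α ∉ A' → toF φ x α = 0}

end GW

/-! Comparing the coefficients of `θ w = w` at `σ α` and at `α` shows that `σ` permutes the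
`2n` exponents `k_i ε_i`, `k'_i ε_i` of `w`. Computing `σ (k_i k'_i ε_i)` through both of them
and using that the exponents are pairwise coprime forces `σ` to fix each exponent; as `A` is
torsion-free (`φ` is nondegenerate and `char F = 0`), `σ` fixes `A'`. The coefficients of `w` then
show that `τ` preserves `T'`, so `τ` is the identity on `T'` by nondegeneracy of `(A', T')`,
and that `χ (ε_i)` has order dividing the coprime integers `k_i` and `k'_i`, so `χ` is trivial
on `A'`. -/

section Exponents

open Function

theorem LinearIndependent.eq_and_eq_of_smul_eq_smul {ι R M : Type*} [Semiring R]
    [AddCommMonoid M] [Module R M] {v : ι → M} (hv : LinearIndependent R v) {a b : R}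
    {i j : ι} (ha : a ≠ 0) (h : a • v i = b • v j) : i = j ∧ a = b := by
  have hsingle : Finsupp.single i a = Finsupp.single j b :=
    hv (by simpa only [Finsupp.linearCombination_single] using h)
  rcases (Finsupp.single_eq_single_iff _ _ _ _).1 hsingle with hij | ⟨ha0, -⟩
  · exact hij
  · exact absurd ha0 ha

theorem eq_of_dvd_of_pairwise_isCoprime {P R : Type*} [CommSemiring R] {c : P → R}
    (hc : Pairwise (IsCoprime on c)) {p q : P} (hp : ¬IsUnit (c p)) (h : c p ∣ c q) : p = q :=
  by_contra fun hpq => hp ((hc hpq).isUnit_of_dvd' dvd_rfl h)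

variable {A ι P : Type*} [AddCommGroup A] {ε : ι → A} {c : P → ℤ} {idx : P → ι}
  (hε : LinearIndependent ℤ ε) (hc0 : ∀ p, c p ≠ 0) (hcu : ∀ p, ¬IsUnit (c p))
  (hc : Pairwise (IsCoprime on c))
include hε hc0 hcu hc

theorem injective_zsmul_comp : Injective fun p => c p • ε (idx p) := by
  intro p q h
  have hpq := (hε.eq_and_eq_of_smul_eq_smul (hc0 p) h).2
  exact eq_of_dvd_of_pairwise_isCoprime hc (hcu p) (hpq ▸ dvd_rfl)

theorem eq_of_zsmul_zsmul_eq {p₀ p₁ p q : P} (hp₀₁ : p₀ ≠ p₁)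
    (h : c p₁ • (c p • ε (idx p)) = c p₀ • (c q • ε (idx q))) : p = p₀ := by
  rw [smul_smul, smul_smul] at h
  have hmul := (hε.eq_and_eq_of_smul_eq_smul (mul_ne_zero (hc0 p₁) (hc0 p)) h).2
  have hdvd : c p₀ ∣ c p := (hc hp₀₁).dvd_of_dvd_mul_left ⟨c q, hmul⟩
  exact (eq_of_dvd_of_pairwise_isCoprime hc (hcu p₀) hdvd).symm

theorem map_zsmul_eq_self (hpartner : ∀ p, ∃ p', p ≠ p' ∧ idx p' = idx p) (σ : A →+ A)
    (hσ : ∀ p, ∃ q, σ (c p • ε (idx p)) = c q • ε (idx q)) (p : P) :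
    σ (c p • ε (idx p)) = c p • ε (idx p) := by
  obtain ⟨p₁, hne, hidx⟩ := hpartner p
  obtain ⟨q₀, hq₀⟩ := hσ p
  obtain ⟨q₁, hq₁⟩ := hσ p₁
  have h : c p₁ • (c q₀ • ε (idx q₀)) = c p • (c q₁ • ε (idx q₁)) := by
    rw [← hq₀, ← hq₁, ← map_zsmul, ← map_zsmul, smul_smul, smul_smul, mul_comm, hidx]
  rw [hq₀, eq_of_zsmul_zsmul_eq hε hc0 hcu hc hne h]

end Exponents

theorem Set.range_eq_of_eq_dite {α : Type*} {m n : ℕ} (hm : 0 < m) (hmn : m ≤ n)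
    {dd : Fin m → α} {D : Fin n → α}
    (hD : ∀ i : Fin n, D i = if h : (i : ℕ) < m then dd ⟨i, h⟩
      else dd ⟨m - 1, Nat.sub_lt hm Nat.one_pos⟩) :
    Set.range D = Set.range dd := by
  ext x
  constructor
  · rintro ⟨i, rfl⟩
    rw [hD]
    split <;> exact ⟨_, rfl⟩
  · rintro ⟨j, rfl⟩
    exact ⟨⟨j, j.2.trans_le hmn⟩, by rw [hD, dif_pos j.2]⟩

theorem Submodule.mapsTo_span_of_units_smul {K V ι : Type*} [Field K] [AddCommGroup V]
    [Module K V] {D : ι → V} (τ : V →ₗ[K] V) (a : ι → Kˣ)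
    (h : ∀ i, (a i : K) • τ (D i) = D i) :
    ∀ d ∈ span K (Set.range D), τ d ∈ span K (Set.range D) := by
  intro d hd
  refine (span_le (p := (span K (Set.range D)).comap τ)).2 ?_ hd
  rintro _ ⟨i, rfl⟩
  have hτD : τ (D i) = (a i : K)⁻¹ • D i := (eq_inv_smul_iff₀ (a i).ne_zero).2 (h i)
  rw [SetLike.mem_coe, mem_comap, hτD]
  exact smul_mem _ _ (subset_span ⟨i, rfl⟩)

theorem Units.eq_one_of_smul_eq_self {K V : Type*} [Field K] [AddCommGroup V] [Module K V]
    {u : Kˣ} {v : V} (hv : v ≠ 0) (h : (u : K) • v = v) : u = 1 :=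
  Units.ext (smul_left_injective K hv (by simpa using h))

theorem MonoidHom.map_ofAdd_eq_one_of_mem_closure {A G ι : Type*} [AddCommGroup A] [Group G]
    {ε : ι → A} {k k' : ι → ℤ} (hk : ∀ i, IsCoprime (k i) (k' i)) {χ : Multiplicative A →* G}
    (hχ : ∀ i, χ (.ofAdd (k i • ε i)) = 1) (hχ' : ∀ i, χ (.ofAdd (k' i • ε i)) = 1) :
    ∀ α ∈ AddSubgroup.closure (Set.range ε), χ (.ofAdd α) = 1 := by
  have hgen : Set.EqOn χ.toAdditiveRight (0 : A →+ Additive G) (Set.range ε) := by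
    rintro _ ⟨i, rfl⟩
    simp only [ofAdd_zsmul, map_zpow] at hχ hχ'
    have h := pow_intGCD_eq_one.2 ⟨hχ i, hχ' i⟩
    rw [Int.isCoprime_iff_gcd_eq_one.1 (hk i), pow_one] at h
    simp [h]
  intro α hα
  simpa using AddMonoidHom.eqOn_closure hgen hα

namespace GW

variable {F : Type*} [Field F] {A : Type*} [AddCommGroup A] {T : Type*} [AddCommGroup T]
  [Module F T] {φ : T →ₗ[F] (A →+ F)}

@[simp] lemma toF_zero : toF φ 0 = 0 := rfl

@[simp] lemma toF_add (x y : W F A T φ) : toF φ (x + y) = toF φ x + toF φ y := rfl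

@[simp] lemma toF_smul (c : F) (x : W F A T φ) : toF φ (c • x) = c • toF φ x := rfl

@[simp] lemma toF_tt (α : A) (d : T) : toF φ (tt φ α d) = Finsupp.single α d := rfl

lemma W.ext {x y : W F A T φ} (h : ∀ α, toF φ x α = toF φ y α) : x = y := Finsupp.ext h

@[elab_as_elim]
lemma W.induction_linear {p : W F A T φ → Prop} (x : W F A T φ) (zero : p 0)
    (add : ∀ x y, p x → p y → p (x + y)) (tt : ∀ α d, p (tt φ α d)) : p x :=
  Finsupp.induction_linear x zero add tt

lemma Nondeg.eq_zero_of_zsmul_eq_zero [CharZero F] (hφ : Nondeg φ) {k : ℤ} (hk : k ≠ 0)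
    {α : A} (h : k • α = 0) : α = 0 :=
  hφ.1 α fun d => by
    have hkd : (k : F) * φ d α = 0 := by rw [← zsmul_eq_mul, ← map_zsmul, h, map_zero]
    exact (mul_eq_zero.1 hkd).resolve_left (Int.cast_ne_zero.2 hk)

theorem Nondeg.eqOn_closure_of_map_zsmul [CharZero F] (hφ : Nondeg φ) {ι : Type*}
    {ε : ι → A} {k : ι → ℤ} (hk : ∀ i, k i ≠ 0) {σ : A →+ A}
    (hσ : ∀ i, σ (k i • ε i) = k i • ε i) :
    Set.EqOn σ (AddMonoidHom.id A) (AddSubgroup.closure (Set.range ε)) := by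
  refine AddMonoidHom.eqOn_closure ?_
  rintro _ ⟨i, rfl⟩
  refine sub_eq_zero.1 (hφ.eq_zero_of_zsmul_eq_zero (hk i) ?_)
  rw [AddMonoidHom.id_apply, zsmul_sub, ← map_zsmul, hσ, sub_self]

theorem NondegPair.eq_self_of_mapsTo {A' : AddSubgroup A} {T' : Submodule F T}
    (hpair : NondegPair φ A' T') {σ : A → A} (hσ : ∀ α ∈ A', σ α = α) {τ : T →ₗ[F] T}
    (hτσ : ∀ d α, φ (τ d) (σ α) = φ d α) (hτ : ∀ d ∈ T', τ d ∈ T') :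
    ∀ d ∈ T', τ d = d := by
  intro d hd
  refine sub_eq_zero.1 (hpair.1 _ (T'.sub_mem (hτ d hd) hd) fun α hα => ?_)
  rw [map_sub, AddMonoidHom.sub_apply, ← hσ α hα, hτσ, hσ α hα, sub_self]

variable {θ : W F A T φ →+ W F A T φ} {χ : Multiplicative A →* Fˣ} {σ : A ≃+ A} {τ : T ≃ₗ[F] T}
  (hθ : ∀ α d, θ (tt φ α d) = (χ (.ofAdd α) : F) • tt φ (σ α) (τ d))
include hθ

theorem toF_map_apply (x : W F A T φ) (α : A) :
    toF φ (θ x) (σ α) = (χ (.ofAdd α) : F) • τ (toF φ x α) := by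
  induction x using W.induction_linear with
  | zero => simp
  | add x y hx hy => simp [hx, hy]
  | tt β d =>
    rw [hθ]
    by_cases h : β = α
    · simp [h]
    · simp [h]

theorem exists_map_eq_of_map_eq_self {P : Type*} [Fintype P] {e : P → A}
    (he : Function.Injective e) {v : P → T} (hv : ∀ p, v p ≠ 0) {x : W F A T φ}
    (hx : toF φ x = ∑ p, Finsupp.single (e p) (v p)) (hfix : θ x = x) (p : P) :
    ∃ q, σ (e p) = e q ∧ (χ (.ofAdd (e p)) : F) • τ (v p) = v q := by
  classical
  have hxβ : ∀ β, toF φ x β = ∑ q, if e q = β then v q else 0 := by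
    simp [hx, Finsupp.finsetSum_apply, Finsupp.single_apply]
  have hxe : ∀ q, toF φ x (e q) = v q := by simp [hxβ, he.eq_iff]
  have hval : toF φ x (σ (e p)) = (χ (.ofAdd (e p)) : F) • τ (v p) := by
    rw [← hxe p, ← toF_map_apply hθ, hfix]
  obtain ⟨q, hq⟩ : σ (e p) ∈ Set.range e := by
    by_contra hσp
    refine smul_ne_zero (χ (.ofAdd (e p))).ne_zero (τ.map_ne_zero_iff.2 (hv p)) ?_
    rw [← hval, hxβ]
    exact Finset.sum_eq_zero fun q _ => if_neg fun h => hσp ⟨q, h⟩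
  exact ⟨q, hq.symm, by rw [← hxe q, hq, hval]⟩

theorem map_eq_and_smul_eq_of_map_eq_self {ι : Type*} [Fintype ι] {ε : ι → A}
    (hε : LinearIndependent ℤ ε) {k k' : ι → ℤ} (hk : ∀ i, 2 ≤ k i) (hk' : ∀ i, 2 ≤ k' i)
    (hcop : Pairwise (Function.onFun IsCoprime (Sum.elim k k'))) {v : ι → T}
    (hv : ∀ i, v i ≠ 0) {x : W F A T φ}
    (hx : x = ∑ i, (tt φ (k i • ε i) (v i) + tt φ (k' i • ε i) (v i))) (hfix : θ x = x)
    (p : ι ⊕ ι) :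
    σ (Sum.elim k k' p • ε (p.elim id id)) = Sum.elim k k' p • ε (p.elim id id) ∧
      (χ (.ofAdd (Sum.elim k k' p • ε (p.elim id id))) : F) • τ (v (p.elim id id)) =
        v (p.elim id id) := by
  set c := Sum.elim k k'
  set idx : ι ⊕ ι → ι := Sum.elim id id
  have hc2 : ∀ p, 2 ≤ c p := by rintro (i | i); exacts [hk i, hk' i]
  have hc0 : ∀ p, c p ≠ 0 := fun p => by have := hc2 p; omega
  have hcu : ∀ p, ¬IsUnit (c p) := fun p h => by
    rcases Int.isUnit_iff.1 h with h | h <;> linarith [hc2 p]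
  have hpartner : ∀ p, ∃ p', p ≠ p' ∧ idx p' = idx p := by
    rintro (i | i)
    exacts [⟨.inr i, Sum.inl_ne_inr, rfl⟩, ⟨.inl i, Sum.inr_ne_inl, rfl⟩]
  have hxF : toF φ x = ∑ p, Finsupp.single (c p • ε (idx p)) (v (idx p)) := by
    rw [hx, Fintype.sum_sum_type, ← Finset.sum_add_distrib]
    rfl
  have he := injective_zsmul_comp (idx := idx) hε hc0 hcu hcop
  have hex := exists_map_eq_of_map_eq_self hθ he (fun p => hv (idx p)) hxF hfix
  have hσ := map_zsmul_eq_self hε hc0 hcu hcop hpartner σ.toAddMonoidHom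
    fun p => (hex p).imp fun _ => And.left
  obtain ⟨q, hq, hχ⟩ := hex p
  obtain rfl : p = q := he ((hσ p).symm.trans hq)
  exact ⟨hσ p, hχ⟩

theorem map_eq_self_of_mem_supportedIn {A' : AddSubgroup A} {T' : Submodule F T}
    (hσ : ∀ α ∈ A', σ α = α) (hτ : ∀ d ∈ T', τ d = d) (hχ : ∀ α ∈ A', χ (.ofAdd α) = 1) :
    ∀ x ∈ supportedIn φ A' T', θ x = x := by
  rintro x ⟨hxT, hxA⟩
  refine W.ext fun β => ?_
  obtain ⟨α, rfl⟩ := σ.surjective β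
  rw [toF_map_apply hθ]
  by_cases hα : α ∈ A'
  · rw [hχ α hα, hτ _ (hxT α), hσ α hα, Units.val_one, one_smul]
  · have hσα : σ α ∉ A' := fun h => hα (σ.injective (hσ _ h) ▸ h)
    rw [hxA α hα, hxA _ hσα, map_zero, smul_zero]

end GW

theorem GW.aut_fixing_w_is_id_on_subalgebra_general
    {F : Type*} [Field F] [CharZero F]
    {A : Type*} [AddCommGroup A]
    {T : Type*} [AddCommGroup T] [Module F T]
    (φ : T →ₗ[F] (A →+ F))
    (hφ : GW.Nondeg φ)
    (n m : ℕ) (hm : 0 < m) (hmn : m ≤ n)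
    -- a basis `ε` of a free subgroup `A'` of rank `n`
    (ε : Fin n → A) (hε : ∀ c : Fin n → ℤ, ∑ i, c i • ε i = 0 → c = 0)
    (A' : AddSubgroup A) (hA' : A' = AddSubgroup.closure (Set.range ε))
    -- a basis `dd` of an `m`-dimensional subspace `T'` of `T`
    (dd : Fin m → T) (hdd : LinearIndependent F dd)
    (T' : Submodule F T) (hT' : T' = Submodule.span F (Set.range dd))
    (hpair : GW.NondegPair φ A' T')
    -- the exponents, pairwise relatively prime and at least 2
    (k k' : Fin n → ℤ) (hk : ∀ i, 2 ≤ k i) (hk' : ∀ i, 2 ≤ k' i)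
    (hcop : ∀ p q : Fin n ⊕ Fin n, p ≠ q →
      IsCoprime (Sum.elim k k' p) (Sum.elim k k' q))
    -- `D i = ∂_i` for `i < m` and `D i = ∂_m` for `m ≤ i ≤ n`
    (D : Fin n → T)
    (hD : ∀ i : Fin n, D i = if h : (i : ℕ) < m then dd ⟨i, h⟩
      else dd ⟨m - 1, Nat.sub_lt hm Nat.one_pos⟩)
    (w : GW.W F A T φ)
    (hw : w = ∑ i, (GW.tt φ (k i • ε i) (D i) + GW.tt φ (k' i • ε i) (D i)))
    -- the automorphism `θ`, of the form `θ(t^α ∂) = χ(α) t^(σ α) (τ ∂)`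
    (θ : GW.W F A T φ ≃ₗ⁅F⁆ GW.W F A T φ)
    (χ : Multiplicative A →* Fˣ) (σ : A ≃+ A) (τ : T ≃ₗ[F] T)
    (hτσ : ∀ (d : T) (γ : A), φ (τ d) (σ γ) = φ d γ)
    (hθ : ∀ (α : A) (d : T),
      θ (GW.tt φ α d) = (χ (Multiplicative.ofAdd α) : F) • GW.tt φ (σ α) (τ d))
    (hfix : θ w = w) :
    ∀ x ∈ GW.supportedIn φ A' T', θ x = x := by
  have hli : LinearIndependent ℤ ε :=
    Fintype.linearIndependent_iff.2 fun g hg => congrFun (hε g hg)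
  have hDT : Set.range D = Set.range dd := Set.range_eq_of_eq_dite hm hmn hD
  have hD0 : ∀ i, D i ≠ 0 := fun i => by
    obtain ⟨j, hj⟩ := hDT ▸ Set.mem_range_self i
    exact hj ▸ hdd.ne_zero j
  have hT'D : T' = Submodule.span F (Set.range D) := hDT ▸ hT'
  have hDmem : ∀ i, D i ∈ T' := fun i => hT'D ▸ Submodule.subset_span (Set.mem_range_self i)
  have hfixed := GW.map_eq_and_smul_eq_of_map_eq_self (θ := θ.toLinearEquiv.toAddMonoidHom) hθ
    hli hk hk' hcop hD0 hw hfix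
  have hσ : ∀ α ∈ A', σ α = α := fun α hα =>
    hφ.eqOn_closure_of_map_zsmul (k := k) (σ := σ.toAddMonoidHom)
      (fun i => by have := hk i; omega) (fun i => (hfixed (.inl i)).1) (hA' ▸ hα)
  have hτ : ∀ d ∈ T', τ d = d := by
    refine hpair.eq_self_of_mapsTo hσ hτσ (τ := τ.toLinearMap) ?_
    exact hT'D ▸ Submodule.mapsTo_span_of_units_smul _ _ fun i => (hfixed (.inl i)).2
  have hχ1 : ∀ p, χ (.ofAdd (Sum.elim k k' p • ε (p.elim id id))) = 1 := fun p =>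
    Units.eq_one_of_smul_eq_self (hD0 _) (hτ _ (hDmem _) ▸ (hfixed p).2)
  have hχ : ∀ α ∈ A', χ (.ofAdd α) = 1 := fun α hα =>
    MonoidHom.map_ofAdd_eq_one_of_mem_closure (fun i => hcop (.inl i) (.inr i) Sum.inl_ne_inr)
      (fun i => hχ1 (.inl i)) (fun i => hχ1 (.inr i)) α (hA' ▸ hα)
  exact GW.map_eq_self_of_mem_supportedIn (θ := θ.toLinearEquiv.toAddMonoidHom) hθ hσ hτ hχ

/-- Lemma 2.4: if an automorphism `θ(t^α ∂) = χ(α) t^(σ α) (τ ∂)` of a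
simple generalized Witt algebra fixes the element
`w = Σ_i (t^(k_i ε_i) + t^(k'_i ε_i)) ∂_i`, then it fixes the subalgebra of elements
supported in `A'` with values in `T'` pointwise. -/
theorem GW.aut_fixing_w_is_id_on_subalgebra
    {F : Type*} [Field F] [CharZero F]
    {A : Type*} [AddCommGroup A]
    {T : Type*} [AddCommGroup T] [Module F T]
    (φ : T →ₗ[F] (A →+ F))
    (hA : Nontrivial A) (hφ : GW.Nondeg φ)
    (n m : ℕ) (hm : 0 < m) (hmn : m ≤ n)
    -- a basis `ε` of a free subgroup `A'` of rank `n`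
    (ε : Fin n → A) (hε : ∀ c : Fin n → ℤ, ∑ i, c i • ε i = 0 → c = 0)
    (A' : AddSubgroup A) (hA' : A' = AddSubgroup.closure (Set.range ε))
    -- a basis `dd` of an `m`-dimensional subspace `T'` of `T`
    (dd : Fin m → T) (hdd : LinearIndependent F dd)
    (T' : Submodule F T) (hT' : T' = Submodule.span F (Set.range dd))
    (hpair : GW.NondegPair φ A' T')
    -- the exponents, pairwise relatively prime and at least 2
    (k k' : Fin n → ℤ) (hk : ∀ i, 2 ≤ k i) (hk' : ∀ i, 2 ≤ k' i)
    (hcop : ∀ p q : Fin n ⊕ Fin n, p ≠ q →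
      IsCoprime (Sum.elim k k' p) (Sum.elim k k' q))
    -- `D i = ∂_i` for `i < m` and `D i = ∂_m` for `m ≤ i ≤ n`
    (D : Fin n → T)
    (hD : ∀ i : Fin n, D i = if h : (i : ℕ) < m then dd ⟨i, h⟩
      else dd ⟨m - 1, Nat.sub_lt hm Nat.one_pos⟩)
    (w : GW.W F A T φ)
    (hw : w = ∑ i, (GW.tt φ (k i • ε i) (D i) + GW.tt φ (k' i • ε i) (D i)))
    -- the automorphism `θ`, of the form `θ(t^α ∂) = χ(α) t^(σ α) (τ ∂)`
    (θ : GW.W F A T φ ≃ₗ⁅F⁆ GW.W F A T φ)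
    (χ : Multiplicative A →* Fˣ) (σ : A ≃+ A) (τ : T ≃ₗ[F] T)
    (hτσ : ∀ (d : T) (γ : A), φ (τ d) (σ γ) = φ d γ)
    (hθ : ∀ (α : A) (d : T),
      θ (GW.tt φ α d) = (χ (Multiplicative.ofAdd α) : F) • GW.tt φ (σ α) (τ d))
    (hfix : θ w = w) :
    ∀ x ∈ GW.supportedIn φ A' T', θ x = x :=
  GW.aut_fixing_w_is_id_on_subalgebra_general φ hφ n m hm hmn ε hε A' hA' dd hdd T' hT' hpair k k'
    hk hk' hcop D hD w hw θ χ σ τ hτσ hθ hfix
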